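/- If a pair of hypergraphs (H1,H2) with H1 ≤ H2 has a tree projection, then there is a winning strategy for the Captain in the Robber and Captain game R&C(H1,H2). -/

import Mathlib

/-- A hypergraph, identified (as in the paper) with its finite set of
finite hyperedges; its nodes are the vertices occurring in some hyperedge. -/
structure HGraph (α : Type*) where
  edges : Finset (Finset α)

namespace HGraph

variable {α : Type*}

/-- The set of nodes of a hypergraph. -/
def nodes (H : HGraph α) : Set α := {x | ∃ h ∈ H.edges, x ∈ h}

/-- `H1 ≤ H2`: every hyperedge of `H1` is contained in some hyperedge of `H2`. -/
def HLe (H1 H2 : HGraph α) : Prop := ∀ h1 ∈ H1.edges, ∃ h2 ∈ H2.edges, h1 ⊆ h2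

/-- `H` is contained in `H'`. -/
def Contained (H H' : HGraph α) : Prop :=
  ∀ h ∈ H.edges, h ∉ H'.edges → ∃ h' ∈ H'.edges, h' ∉ H.edges ∧ h ⊆ h'

/-- `H` is properly contained in `H'`. -/
def ProperlyContained (H H' : HGraph α) : Prop := H.Contained H' ∧ H ≠ H'

/-- A hypergraph is reduced if no hyperedge is a proper subset of another one. -/
def Reduced (H : HGraph α) : Prop := ∀ h ∈ H.edges, ∀ h' ∈ H.edges, ¬ h ⊂ h'

end HGraph

/-- The type of hyperedges of `H`. -/
abbrev Hyperedge {α : Type*} (H : HGraph α) := {h : Finset α // h ∈ H.edges}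

/-- A join tree for a hypergraph `H`: a tree whose vertices are the hyperedges of `H`
such that, for every node `X`, the hyperedges containing `X` induce a connected subtree. -/
structure JoinTree {α : Type*} (H : HGraph α) where
  T : SimpleGraph (Hyperedge H)
  isTree : T.IsTree
  node_connected : ∀ X : α, (T.induce {h : Hyperedge H | X ∈ h.1}).Preconnected

/-- A hypergraph is acyclic iff it has a join tree. -/
def HGraph.Acyclic {α : Type*} (H : HGraph α) : Prop := Nonempty (JoinTree H)

/-- `Ha` is a tree projection of `H1` w.r.t. `H2`. -/
def IsTreeProjection {α : Type*} (H1 H2 Ha : HGraph α) : Prop :=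
  Ha.Acyclic ∧ H1.HLe Ha ∧ Ha.HLe H2

/-- `Ha` is a minimal tree projection of `H1` w.r.t. `H2`. -/
def IsMinimalTreeProjection {α : Type*} (H1 H2 Ha : HGraph α) : Prop :=
  IsTreeProjection H1 H2 Ha ∧
  ∀ Ha' : HGraph α, IsTreeProjection H1 H2 Ha' → ¬ Ha'.ProperlyContained Ha

namespace HGraph

variable {α : Type*}

/-- `X` is `[V]`-adjacent to `Y`: some hyperedge contains both outside of `V`. -/
def Adj (H : HGraph α) (V : Set α) (X Y : α) : Prop :=
  ∃ h ∈ H.edges, X ∈ h ∧ Y ∈ h ∧ X ∉ V ∧ Y ∉ V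

/-- There is a `[V]`-path from `X` to `Y`. -/
def VPath (H : HGraph α) (V : Set α) : α → α → Prop :=
  Relation.ReflTransGen (H.Adj V)

/-- The set `W` is `[V]`-connected. -/
def VConnected (H : HGraph α) (V W : Set α) : Prop :=
  ∀ X ∈ W, ∀ Y ∈ W, H.VPath V X Y

/-- `C` is a `[V]`-component of `H`: a maximal `[V]`-connected nonempty subset
of `nodes(H) \ V`. -/
def IsComponent (H : HGraph α) (V C : Set α) : Prop :=
  C.Nonempty ∧ C ⊆ H.nodes \ V ∧ H.VConnected V C ∧
  ∀ C' : Set α, C ⊆ C' → C' ⊆ H.nodes \ V → H.VConnected V C' → C' = C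

/-- The frontier `Fr(C,H)`: the union of all hyperedges meeting `C`. -/
def Fr (H : HGraph α) (C : Set α) : Set α :=
  {x | ∃ h ∈ H.edges, x ∈ h ∧ ∃ y ∈ C, y ∈ h}

/-- The border `∂(C,H) = Fr(C,H) \ C`. -/
def border (H : HGraph α) (C : Set α) : Set α := H.Fr C \ C

/-- `X` `[V]`-touches the set `W`: `X` is `[∅]`-adjacent to some node `Z` from which
there is a `[V]`-path to some node of `W`. -/
def Touches (H : HGraph α) (V : Set α) (X : α) (W : Set α) : Prop :=
  ∃ Z : α, H.Adj ∅ X Z ∧ ∃ Y ∈ W, H.VPath V Z Y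

end HGraph

namespace JoinTree

variable {α : Type*} {H : HGraph α}

/-- The vertices of the subtree rooted at `h_s` when the join tree is rooted at
(the side of) `h_r`, for adjacent vertices `h_r`, `h_s`. -/
def subtreeVerts (JT : JoinTree H) (h_r h_s : Hyperedge H) : Set (Hyperedge H) :=
  {v | JT.T.dist v h_s < JT.T.dist v h_r}

/-- The nodes occurring in the vertices of the subtree rooted at `h_s` (w.r.t. `h_r`). -/
def subtreeNodes (JT : JoinTree H) (h_r h_s : Hyperedge H) : Set α :=
  {x | ∃ v ∈ JT.subtreeVerts h_r h_s, x ∈ v.1}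

/-- `h_s` is a child of `h_r` in the join tree rooted at `root`. -/
def IsChild (JT : JoinTree H) (root h_r h_s : Hyperedge H) : Prop :=
  JT.T.Adj h_r h_s ∧ JT.T.dist root h_r < JT.T.dist root h_s

end JoinTree

/-- The sub-hypergraph of `H1` induced by the node set `N` is `[∅]`-connected. -/
def InducedConn {α : Type*} (H1 : HGraph α) (N : Set α) : Prop :=
  ∀ X ∈ N, ∀ Y ∈ N,
    Relation.ReflTransGen
      (fun a b => a ∈ N ∧ b ∈ N ∧ ∃ h ∈ H1.edges, a ∈ h ∧ b ∈ h) X Y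

/-- A join tree of `Ha` is `H1`-connected. -/
def JoinTree.IsConnectedFor {α : Type*} {Ha : HGraph α} (JT : JoinTree Ha)
    (H1 : HGraph α) : Prop :=
  ∀ h_r h_s : Hyperedge Ha, JT.T.Adj h_r h_s → InducedConn H1 (JT.subtreeNodes h_r h_s)

/-- `C` is the component `C⊤(h)` associated with vertex `h` of the join tree rooted at
`root`: conventionally `nodes(H1)` for the root, and otherwise the unique
`[h_p]`-component of `H1` (for `h_p` the parent of `h`) determined by the subtree at `h`. -/
def CtopAt {α : Type*} (H1 : HGraph α) {Ha : HGraph α} (JT : JoinTree Ha)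
    (root h : Hyperedge Ha) (C : Set α) : Prop :=
  (h = root ∧ C = H1.nodes) ∨
  ∃ h_p : Hyperedge Ha, JT.IsChild root h_p h ∧ H1.IsComponent (h_p.1 : Set α) C ∧
    JT.subtreeNodes h_p h = C ∪ ((h.1 : Set α) ∩ (h_p.1 : Set α))

/-- The join tree `JT` of `Ha`, rooted at `root`, is an `H1`-component tree. -/
def JoinTree.IsComponentTreeFor {α : Type*} {Ha : HGraph α} (JT : JoinTree Ha)
    (H1 : HGraph α) (root : Hyperedge Ha) : Prop :=
  (∀ h_r h_s : Hyperedge Ha, JT.IsChild root h_r h_s →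
    (∃! C : Set α, H1.IsComponent (h_r.1 : Set α) C ∧
      JT.subtreeNodes h_r h_s = C ∪ ((h_s.1 : Set α) ∩ (h_r.1 : Set α))) ∧
    (∀ C : Set α, H1.IsComponent (h_r.1 : Set α) C →
      JT.subtreeNodes h_r h_s = C ∪ ((h_s.1 : Set α) ∩ (h_r.1 : Set α)) →
      ((h_s.1 : Set α) ∩ C).Nonempty ∧ (h_s.1 : Set α) ⊆ H1.Fr C)) ∧
  (∀ h_r : Hyperedge Ha, ∀ Ctop : Set α, CtopAt H1 JT root h_r Ctop →
    ∀ C_r : Set α, H1.IsComponent (h_r.1 : Set α) C_r → C_r ⊆ Ctop →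
    ∃! h_s : Hyperedge Ha, JT.IsChild root h_r h_s ∧
      JT.subtreeNodes h_r h_s = C_r ∪ ((h_s.1 : Set α) ∩ (h_r.1 : Set α)))

/-! ### The Robber and Captain game -/

/-- A position for the Captain: a set of nodes included in some hyperedge of `H2`. -/
def IsPosition {α : Type*} (H2 : HGraph α) (M : Set α) : Prop :=
  ∃ h2 ∈ H2.edges, M ⊆ (h2 : Set α)

/-- A configuration of the game `R&C(H1,H2)`. -/
def IsConfig {α : Type*} (H1 H2 : HGraph α) (M C : Set α) : Prop :=
  IsPosition H2 M ∧ (H1.IsComponent M C ∨ C = ∅ ∨ (M = ∅ ∧ C = H1.nodes))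

/-- `C_j` is an `[(M_i,C_i),M_j]`-escape component: an `[M_j]`-component of `H1`
such that `C_i ∪ C_j` is `[M_i ∩ M_j]`-connected. -/
def EscapeComp {α : Type*} (H1 : HGraph α) (M_i C_i M_j C_j : Set α) : Prop :=
  H1.IsComponent M_j C_j ∧ H1.VConnected (M_i ∩ M_j) (C_i ∪ C_j)

/-- The escape door `ED((M_i,C),M') = ∂(C,H1) \ M'` (it only depends on `C` and `M'`). -/
def escapeDoor {α : Type*} (H1 : HGraph α) (C M' : Set α) : Set α :=
  H1.border C \ M'

/-- `σ` is a strategy for the Captain in `R&C(H1,H2)`. -/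
def IsStrategy {α : Type*} (H1 H2 : HGraph α) (σ : Set α → Set α → Set α) : Prop :=
  ∀ M C : Set α, IsConfig H1 H2 M C → C ≠ ∅ →
    IsPosition H2 (σ M C) ∧ σ M C ⊆ H1.Fr C

/-- One step of the game played according to `σ`: from configuration `p` the Captain
moves to `σ p.1 p.2`, and the Robber either selects an escape component or is captured. -/
def GameStep {α : Type*} (H1 : HGraph α) (σ : Set α → Set α → Set α)
    (p q : Set α × Set α) : Prop :=
  p.2 ≠ ∅ ∧ q.1 = σ p.1 p.2 ∧
    (EscapeComp H1 p.1 p.2 q.1 q.2 ∨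
      ((∀ C : Set α, ¬ EscapeComp H1 p.1 p.2 q.1 C) ∧ q.2 = ∅))

/-- `p` is a vertex of the game tree `T(σ)` (reachable from the root `(∅, nodes(H1))`). -/
def InGameTree {α : Type*} (H1 : HGraph α) (σ : Set α → Set α → Set α)
    (p : Set α × Set α) : Prop :=
  Relation.ReflTransGen (GameStep H1 σ) (∅, H1.nodes) p

/-- `σ` is winning: the game tree `T(σ)` is finite, i.e., there is no infinite play. -/
def Winning {α : Type*} (H1 : HGraph α) (σ : Set α → Set α → Set α) : Prop :=
  ¬ ∃ f : ℕ → Set α × Set α, f 0 = (∅, H1.nodes) ∧ ∀ n, GameStep H1 σ (f n) (f (n + 1))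

/-- `M_j` is a monotone move in `(M_i, C_i)`. -/
def MonotoneMove {α : Type*} (H1 : HGraph α) (M_i C_i M_j : Set α) : Prop :=
  ∀ C : Set α, EscapeComp H1 M_i C_i M_j C → C ⊆ C_i

/-- `σ` is a monotone strategy. -/
def MonotoneStrategy {α : Type*} (H1 : HGraph α) (σ : Set α → Set α → Set α) : Prop :=
  ∀ p q : Set α × Set α, InGameTree H1 σ p → GameStep H1 σ p q →
    MonotoneMove H1 p.1 p.2 q.1

/-!
Fix a join tree of the tree projection `Ha`, and let the Robber stand in a component `C` whose
border `∂C` lies in a hyperedge of `Ha`. Then some hyperedge `E` of `Ha` contains `∂C` and meets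
`C`: the hyperedges of `Ha` meeting `C` form a subtree, and its vertex nearest to a hyperedge
containing `∂C` contains all of `∂C`, because the hyperedges through any single node form a
subtree as well. The Captain occupies `E ∩ Fr(C)`. As `∂C` stays occupied, the Robber cannot
leave `C`, and he loses the nodes of `C ∩ E`; the new component has its border inside `E` again.
So the Robber's component shrinks strictly at every move, and every play is finite.
-/

namespace SimpleGraph

variable {V : Type*} {G : SimpleGraph V}

lemma IsAcyclic.support_subset_of_induce_preconnected (hG : G.IsAcyclic) {S : Set V}
    (hS : (G.induce S).Preconnected) {a b : V} (ha : a ∈ S) (hb : b ∈ S) {p : G.Walk a b}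
    (hp : p.IsPath) : ∀ x ∈ p.support, x ∈ S := by
  classical
  obtain ⟨q⟩ := hS ⟨a, ha⟩ ⟨b, hb⟩
  let q' : G.Walk a b := q.map (Embedding.induce S).toHom
  have hpq : p = q'.bypass :=
    Subtype.mk.inj <| (hG.subsingleton_path a b).elim ⟨p, hp⟩ ⟨q'.bypass, q'.bypass_isPath⟩
  intro x hx
  rw [hpq] at hx
  have hx' : x ∈ (q.map (Embedding.induce S).toHom).support := q'.support_bypass_subset_support hx
  rw [Walk.support_map, List.mem_map] at hx'
  obtain ⟨y, -, rfl⟩ := hx'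
  exact y.2

lemma Preconnected.exists_isPath_meets_only_at_end (hG : G.Preconnected) {S : Set V}
    (hS : S.Nonempty) (g : V) :
    ∃ e ∈ S, ∃ t : G.Walk g e, t.IsPath ∧ ∀ u ∈ t.support, u ∈ S → u = e := by
  classical
  have hex : ∃ n, ∃ v ∈ S, ∃ p : G.Walk g v, p.length = n := by
    obtain ⟨v, hv⟩ := hS
    obtain ⟨p⟩ := hG g v
    exact ⟨_, v, hv, p, rfl⟩
  obtain ⟨e, he, p, hp⟩ := Nat.find_spec hex
  refine ⟨e, he, p.bypass, p.bypass_isPath, fun u hu huS => ?_⟩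
  by_contra hne
  have hshorter : (p.bypass.takeUntil u hu).length < Nat.find hex :=
    calc _ < p.bypass.length := Walk.length_takeUntil_lt_length hu hne
      _ ≤ p.length := p.length_bypass_le_length
      _ = Nat.find hex := hp
  exact Nat.find_min hex hshorter ⟨u, huS, _, rfl⟩

lemma Walk.IsPath.append {a z b : V} {t : G.Walk a z} {d : G.Walk z b}
    (ht : t.IsPath) (hd : d.IsPath) (hdisj : ∀ u ∈ t.support, u ∈ d.support → u = z) :
    (t.append d).IsPath := by
  rw [Walk.isPath_def, Walk.support_append]
  refine ht.support_nodup.append hd.support_nodup.tail fun u hut hud => ?_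
  obtain rfl : u = z := hdisj u hut (d.support.tail_subset hud)
  exact (List.nodup_cons.1 (d.cons_tail_support ▸ hd.support_nodup)).1 hud

/-- `e` is the vertex of `S` nearest to `g`. -/
lemma IsTree.exists_mem_support_of_induce_preconnected (hG : G.IsTree) {S : Set V}
    (hS : (G.induce S).Preconnected) (hne : S.Nonempty) (g : V) :
    ∃ e ∈ S, ∀ v ∈ S, ∀ p : G.Walk g v, p.IsPath → e ∈ p.support := by
  obtain ⟨e, he, t, ht, hfirst⟩ := hG.connected.preconnected.exists_isPath_meets_only_at_end hne g
  refine ⟨e, he, fun v hv p hp => ?_⟩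
  obtain ⟨q, hq, -⟩ := hG.existsUnique_path e v
  have hqS := hG.isAcyclic.support_subset_of_induce_preconnected hS he hv hq
  have htq : (t.append q).IsPath :=
    ht.append hq fun u hut huq => hfirst u hut (hqS u huq)
  have hpq : p = t.append q :=
    Subtype.mk.inj <| (hG.isAcyclic.subsingleton_path g v).elim ⟨p, hp⟩ ⟨_, htq⟩
  rw [hpq, Walk.mem_support_append_iff]
  exact Or.inl t.end_mem_support

end SimpleGraph

namespace HGraph

variable {α : Type*} {H : HGraph α} {M C : Set α}

lemma Adj.symm {V : Set α} {x y : α} (h : H.Adj V x y) : H.Adj V y x :=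
  let ⟨e, he, hx, hy, hxV, hyV⟩ := h
  ⟨e, he, hy, hx, hyV, hxV⟩

instance {V : Set α} : Std.Symm (H.Adj V) := ⟨fun _ _ => Adj.symm⟩

lemma VPath.symm {V : Set α} {x y : α} (h : H.VPath V x y) : H.VPath V y x :=
  Std.Symm.symm (r := Relation.ReflTransGen (H.Adj V)) _ _ h

lemma VPath.mem_nodes_diff {V : Set α} {x y : α} (hx : x ∈ H.nodes \ V) (h : H.VPath V x y) :
    y ∈ H.nodes \ V := by
  rcases Relation.ReflTransGen.cases_tail h with rfl | ⟨_, _, e, he, -, hye, -, hyV⟩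
  exacts [hx, ⟨⟨e, he, hye⟩, hyV⟩]

lemma IsComponent.mem_of_vPath (hC : H.IsComponent M C) {x y : α} (hx : x ∈ C)
    (hxy : H.VPath M x y) : y ∈ C := by
  obtain ⟨-, hCsub, hCconn, hmax⟩ := hC
  let D : Set α := {z | ∃ x ∈ C, H.VPath M x z}
  have hDC : D = C := by
    refine hmax D (fun z hz => ⟨z, hz, .refl⟩) ?_ ?_
    · rintro z ⟨x, hx, hxz⟩
      exact hxz.mem_nodes_diff (hCsub hx)
    · rintro z ⟨x, hx, hxz⟩ w ⟨y, hy, hyw⟩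
      exact hxz.symm.trans ((hCconn x hx y hy).trans hyw)
  exact hDC ▸ ⟨x, hx, hxy⟩

lemma IsComponent.border_subset (hC : H.IsComponent M C) : H.border C ⊆ M := by
  rintro x ⟨⟨e, he, hxe, y, hyC, hye⟩, hxC⟩
  by_contra hxM
  exact hxC (hC.mem_of_vPath hyC (.single ⟨e, he, hye, hxe, (hC.2.1 hyC).2, hxM⟩))

lemma subset_fr_self (hC : C ⊆ H.nodes) : C ⊆ H.Fr C := by
  intro x hx
  obtain ⟨e, he, hxe⟩ := hC hx
  exact ⟨e, he, hxe, x, hx, hxe⟩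

lemma border_nodes : H.border H.nodes = ∅ :=
  Set.sdiff_eq_empty.2 fun _ ⟨e, he, hxe, _⟩ => ⟨e, he, hxe⟩

lemma nodes_finite : H.nodes.Finite :=
  (H.edges.finite_toSet.biUnion fun h _ => h.finite_toSet).subset
    fun _ ⟨_, hh, hx⟩ => Set.mem_biUnion hh hx

lemma subset_of_border_subset_of_vConnected {C' K : Set α} (hb : H.border C ⊆ K)
    (hC : C.Nonempty) (hconn : H.VConnected K (C ∪ C')) : C' ⊆ C := by
  obtain ⟨c, hc⟩ := hC
  have hpath : ∀ y, H.VPath K c y → y ∈ C := by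
    intro y hy
    induction hy with
    | refl => exact hc
    | tail _ hadj ih =>
      obtain ⟨e, he, hbe, hye, -, hyK⟩ := hadj
      by_contra hyC
      exact hyK (hb ⟨⟨e, he, hye, _, ih, hbe⟩, hyC⟩)
  exact fun z hz => hpath z (hconn c (.inl hc) z (.inr hz))

end HGraph

lemma EscapeComp.ssubset {α : Type*} {H : HGraph α} {M C M' C' : Set α} {x : α}
    (hesc : EscapeComp H M C M' C') (hM : H.border C ⊆ M) (hM' : H.border C ⊆ M')
    (hx : x ∈ C) (hxM' : x ∈ M') : C' ⊂ C :=
  have hsub : C' ⊆ C :=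
    H.subset_of_border_subset_of_vConnected (Set.subset_inter hM hM') ⟨x, hx⟩ hesc.2
  ssubset_of_subset_not_subset hsub fun h => (hesc.1.2.1 (h hx)).2 hxM'

namespace JoinTree

variable {α : Type*} {H1 Ha : HGraph α} {M C : Set α}

lemma induce_preconnected_of_isComponent (JT : JoinTree Ha) (hle : H1.HLe Ha)
    (hC : H1.IsComponent M C) :
    (JT.T.induce {e : Hyperedge Ha | ∃ x ∈ C, x ∈ e.1}).Preconnected := by
  set S := {e : Hyperedge Ha | ∃ x ∈ C, x ∈ e.1}
  have hnode : ∀ z (hz : z ∈ C) (e f : Hyperedge Ha) (he : z ∈ e.1) (hf : z ∈ f.1),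
      (JT.T.induce S).Reachable (⟨e, z, hz, he⟩ : S) ⟨f, z, hz, hf⟩ := fun z hz e f he hf =>
    (JT.node_connected z ⟨e, he⟩ ⟨f, hf⟩).map
      (SimpleGraph.induceHomOfLE (G := JT.T)
        (show {e : Hyperedge Ha | z ∈ e.1} ≤ S from fun _ hg => ⟨z, hz, hg⟩)).toHom
  rintro ⟨a, x, hxC, hxa⟩ ⟨b, y, hyC, hyb⟩
  have hreach : ∀ y, H1.VPath M x y → ∀ (hy : y ∈ C) (f : Hyperedge Ha) (hf : y ∈ f.1),
      (JT.T.induce S).Reachable (⟨a, x, hxC, hxa⟩ : S) ⟨f, y, hy, hf⟩ := by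
    intro y hxy
    induction hxy with
    | refl => exact fun _ f hf => hnode x hxC a f hxa hf
    | tail hxc hcy ih =>
      obtain ⟨e, he, hce, hye, -, -⟩ := hcy
      obtain ⟨E, hE, heE⟩ := hle e he
      intro hy f hf
      exact (ih (hC.mem_of_vPath hxC hxc) ⟨E, hE⟩ (heE hce)).trans
        (hnode _ hy ⟨E, hE⟩ f (heE hye) hf)
  exact hreach y (hC.2.2.1 x hxC y hyC) hyC b hyb

end JoinTree

namespace HGraph

variable {α : Type*} {H1 Ha : HGraph α} {M C : Set α}

def IsBorderCover (H : HGraph α) (C : Set α) (E : Finset α) : Prop :=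
  H.border C ⊆ E ∧ ∃ x ∈ C, x ∈ E

lemma Acyclic.exists_isBorderCover (hA : Ha.Acyclic) (hle : H1.HLe Ha)
    (hC : H1.IsComponent M C) {g : Finset α} (hg : g ∈ Ha.edges) (hbg : H1.border C ⊆ g) :
    ∃ E ∈ Ha.edges, H1.IsBorderCover C E := by
  obtain ⟨JT⟩ := hA
  have hne : {e : Hyperedge Ha | ∃ x ∈ C, x ∈ e.1}.Nonempty := by
    obtain ⟨x, hx⟩ := hC.1
    obtain ⟨h, hh, hxh⟩ := (hC.2.1 hx).1
    obtain ⟨E, hE, hhE⟩ := hle h hh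
    exact ⟨⟨E, hE⟩, x, hx, hhE hxh⟩
  obtain ⟨⟨E, hE⟩, ⟨x, hxC, hxE⟩, hgate⟩ :=
    JT.isTree.exists_mem_support_of_induce_preconnected
      (JT.induce_preconnected_of_isComponent hle hC) hne ⟨g, hg⟩
  refine ⟨E, hE, fun w hw => ?_, x, hxC, hxE⟩
  obtain ⟨h, hh, hwh, y, hyC, hyh⟩ := hw.1
  obtain ⟨F, hF, hhF⟩ := hle h hh
  obtain ⟨p, hp, -⟩ := JT.isTree.existsUnique_path ⟨g, hg⟩ ⟨F, hF⟩
  exact JT.isTree.isAcyclic.support_subset_of_induce_preconnected (JT.node_connected w)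
    (hbg hw) (hhF hwh) hp _ (hgate ⟨F, hF⟩ ⟨y, hyC, hhF hyh⟩ p hp)

end HGraph

section Game

variable {α : Type*} {H1 H2 Ha : HGraph α} {M C C' : Set α}

open Classical in
/-- The fallback `∅` is never played from a configuration reachable from the root. -/
noncomputable def coverMove (H1 Ha : HGraph α) (C : Set α) : Set α :=
  if h : ∃ E ∈ Ha.edges, H1.IsBorderCover C E then ↑h.choose ∩ H1.Fr C else ∅

lemma coverMove_subset_fr : coverMove H1 Ha C ⊆ H1.Fr C := by
  unfold coverMove
  split_ifs
  exacts [Set.inter_subset_right, Set.empty_subset _]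

lemma exists_coverMove_eq (h : ∃ E ∈ Ha.edges, H1.IsBorderCover C E) :
    ∃ E ∈ Ha.edges, H1.IsBorderCover C E ∧ coverMove H1 Ha C = ↑E ∩ H1.Fr C :=
  ⟨h.choose, h.choose_spec.1, h.choose_spec.2, dif_pos h⟩

lemma isPosition_coverMove (hle : Ha.HLe H2) (hH2 : H2.edges.Nonempty) :
    IsPosition H2 (coverMove H1 Ha C) := by
  by_cases h : ∃ E ∈ Ha.edges, H1.IsBorderCover C E
  · obtain ⟨E, hE, -, hmove⟩ := exists_coverMove_eq h
    obtain ⟨h2, hh2, hEh2⟩ := hle E hE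
    exact ⟨h2, hh2, hmove ▸ Set.inter_subset_left.trans (Finset.coe_subset.2 hEh2)⟩
  · obtain ⟨h2, hh2⟩ := hH2
    exact ⟨h2, hh2, by simp [coverMove, h]⟩

lemma EscapeComp.ssubset_of_coverMove (hA : Ha.Acyclic) (hle : H1.HLe Ha)
    (hC : C ⊆ H1.nodes) (hM : H1.border C ⊆ M) (hcov : ∃ E ∈ Ha.edges, H1.IsBorderCover C E)
    (hesc : EscapeComp H1 M C (coverMove H1 Ha C) C') :
    C' ⊂ C ∧ ∃ E ∈ Ha.edges, H1.IsBorderCover C' E := by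
  obtain ⟨E, hE, ⟨hbE, x, hxC, hxE⟩, hmove⟩ := exists_coverMove_eq hcov
  rw [hmove] at hesc
  refine ⟨hesc.ssubset hM (Set.subset_inter hbE Set.sdiff_subset) hxC
    ⟨hxE, H1.subset_fr_self hC hxC⟩, ?_⟩
  exact hA.exists_isBorderCover hle hesc.1 hE (hesc.1.border_subset.trans Set.inter_subset_left)

lemma winning_coverMove (hA : Ha.Acyclic) (hle : H1.HLe Ha) :
    Winning H1 (fun _ C => coverMove H1 Ha C) := by
  rintro ⟨f, hf0, hstep⟩
  have hmove (n : ℕ) : (f (n + 1)).1 = coverMove H1 Ha (f n).2 := (hstep n).2.1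
  have hesc (n : ℕ) : EscapeComp H1 (f n).1 (f n).2 (coverMove H1 Ha (f n).2) (f (n + 1)).2 :=
    hmove n ▸ (hstep n).2.2.resolve_right fun h => (hstep (n + 1)).1 h.2
  have hinv (n : ℕ) : (f n).2 ⊆ H1.nodes ∧ H1.border (f n).2 ⊆ (f n).1 ∧
      ∃ E ∈ Ha.edges, H1.IsBorderCover (f n).2 E := by
    induction n with
    | zero =>
      obtain ⟨x, h, hh, hxh⟩ := Set.nonempty_iff_ne_empty.2 (hf0 ▸ (hstep 0).1)
      obtain ⟨E, hE, hhE⟩ := hle h hh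
      have hb : H1.border H1.nodes ⊆ ∅ := H1.border_nodes.subset
      rw [hf0]
      exact ⟨subset_rfl, hb, E, hE, hb.trans (Set.empty_subset _), x, ⟨h, hh, hxh⟩, hhE hxh⟩
    | succ n ih =>
      obtain ⟨hlt, hcov⟩ := (hesc n).ssubset_of_coverMove hA hle ih.1 ih.2.1 ih.2.2
      rw [hmove n]
      exact ⟨hlt.subset.trans ih.1, (hesc n).1.border_subset, hcov⟩
  have hlt (n : ℕ) : (f (n + 1)).2 ⊂ (f n).2 :=
    ((hesc n).ssubset_of_coverMove hA hle (hinv n).1 (hinv n).2.1 (hinv n).2.2).1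
  exact not_strictAnti_of_wellFoundedLT (fun n => (f n).2.ncard) <| strictAnti_nat_of_succ_lt
    fun n => Set.ncard_lt_ncard (hlt n) (H1.nodes_finite.subset (hinv n).1)

end Game

theorem tp_implies_winning_strategy_general {α : Type*} (H1 H2 : HGraph α)
    (htp : ∃ Ha : HGraph α, IsTreeProjection H1 H2 Ha) :
    ∃ σ : Set α → Set α → Set α, IsStrategy H1 H2 σ ∧ Winning H1 σ := by
  obtain ⟨Ha, hA, hle1, hle2⟩ := htp
  refine ⟨fun _ C => coverMove H1 Ha C, fun M C hconf _ => ⟨?_, coverMove_subset_fr⟩,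
    winning_coverMove hA hle1⟩
  obtain ⟨h2, hh2, -⟩ := hconf.1
  exact isPosition_coverMove hle2 ⟨h2, hh2⟩

theorem tp_implies_winning_strategy {α : Type*} (H1 H2 : HGraph α)
    (hle : H1.HLe H2)
    (htp : ∃ Ha : HGraph α, IsTreeProjection H1 H2 Ha) :
    ∃ σ : Set α → Set α → Set α, IsStrategy H1 H2 σ ∧ Winning H1 σ :=
  tp_implies_winning_strategy_general H1 H2 htp
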